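/- Let H be a hypothesis class, P_{S_1},…,P_{S_n} source probability distributions over X×Y with marginals D_{S_1},…,D_{S_n}, and P_T a target distribution over X×Y with marginal D_T. For every probability distribution ρ over H and every weight distribution v = (v_1,…,v_n) over the source domains: R_{P_T}(G_ρ) ≤ Σ_{j=1}^n v_j·R_{P_{S_j}}(G_ρ) + (1/2)·dis_ρ(D_S^v,D_T) + λ_ρ^v, where λ_ρ^v = | e_{P_T}(G_ρ,G_ρ) − Σ_j v_j·e_{P_{S_j}}(G_ρ,G_ρ) |. -/

import Mathlib

open MeasureTheory
open scoped ENNReal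

noncomputable section

variable {H X : Type*} [MeasurableSpace H] [MeasurableSpace X]

/-- Disagreement indicator `1[h(x) ≠ h'(x)]` for a pair of classifiers. -/
def dAgree (f : H → X → Bool) (hh : H × H) (x : X) : ℝ :=
  if f hh.1 x = f hh.2 x then 0 else 1

/-- Expected disagreement `R_D(Gρ,Gρ) = E_{(h,h')∼ρ×ρ} E_{x∼D} 1[h(x)≠h'(x)]`. -/
def expDis (f : H → X → Bool) (ρ : Measure H) (D : Measure X) : ℝ :=
  ∫ hh : H × H, ∫ x, dAgree f hh x ∂D ∂(ρ.prod ρ)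

/-- Empirical disagreement `(1/m) Σ_i E_{(h,h')∼ρ×ρ} 1[h(x_i)≠h'(x_i)]`. -/
def empDis (f : H → X → Bool) (ρ : Measure H) {m : ℕ} (s : Fin m → X) : ℝ :=
  (1 / (m : ℝ)) * ∑ i, ∫ hh : H × H, dAgree f hh (s i) ∂(ρ.prod ρ)

/-- Kullback-Leibler divergence `KL(ρ‖π) = E_{h∼ρ} ln (dρ/dπ (h))`. -/
def KLd (ρ π : Measure H) : ℝ := ∫ h, Real.log ((ρ.rnDeriv π h).toReal) ∂ρ

/-- Error indicator `1[h(x) ≠ y]` on a labeled example. -/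
def errInd (f : H → X → Bool) (h : H) (z : X × Bool) : ℝ :=
  if f h z.1 = z.2 then 0 else 1

/-- Gibbs risk `R_P(Gρ) = E_{h∼ρ} E_{(x,y)∼P} 1[h(x)≠y]`. -/
def gibbsRisk (f : H → X → Bool) (ρ : Measure H) (P : Measure (X × Bool)) : ℝ :=
  ∫ h, ∫ z, errInd f h z ∂P ∂ρ

/-- Expected joint error `e_P(Gρ,Gρ) = E_{(h,h')∼ρ×ρ} E_{(x,y)∼P} 1[h(x)≠y]·1[h'(x)≠y]`. -/
def jointErr (f : H → X → Bool) (ρ : Measure H) (P : Measure (X × Bool)) : ℝ :=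
  ∫ hh : H × H, ∫ z, errInd f hh.1 z * errInd f hh.2 z ∂P ∂(ρ.prod ρ)

/-- Empirical Gibbs risk `(1/m) Σ_i E_{h∼ρ} 1[h(x_i)≠y_i]`. -/
def empGibbs (f : H → X → Bool) (ρ : Measure H) {m : ℕ} (s : Fin m → X × Bool) : ℝ :=
  (1 / (m : ℝ)) * ∑ i, ∫ h, errInd f h (s i) ∂ρ

/-! With binary labels, two classifiers disagree on `x` exactly when one of them errs on `(x, y)`
and the other does not: `1[h(x) ≠ h'(x)] = 1[h errs] + 1[h' errs] - 2·1[both err]`.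
Integrating over `(h, h') ∼ ρ × ρ` and `(x, y) ∼ P` splits the Gibbs risk of every domain as
`R_P(Gρ) = ½ R_D(Gρ, Gρ) + e_P(Gρ, Gρ)`. Subtracting the `v`-weighted source identities from the
target one and bounding both differences by their absolute values gives the bound. -/

omit [MeasurableSpace H] [MeasurableSpace X] in
lemma dAgree_eq_errInd (f : H → X → Bool) (hh : H × H) (z : X × Bool) :
    dAgree f hh z.1
      = errInd f hh.1 z + errInd f hh.2 z - 2 * (errInd f hh.1 z * errInd f hh.2 z) := by
  unfold dAgree errInd
  cases f hh.1 z.1 <;> cases f hh.2 z.1 <;> cases z.2 <;> norm_num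

omit [MeasurableSpace H] [MeasurableSpace X] in
lemma norm_errInd_le_one (f : H → X → Bool) (h : H) (z : X × Bool) : ‖errInd f h z‖ ≤ 1 := by
  unfold errInd; split <;> norm_num

section GibbsDecomposition

variable {f : H → X → Bool}

lemma measurable_errInd {α : Type*} [MeasurableSpace α] (hf : Measurable (Function.uncurry f))
    {g : α → H} {k : α → X × Bool} (hg : Measurable g) (hk : Measurable k) :
    Measurable fun a => errInd f (g a) (k a) :=
  Measurable.ite (measurableSet_eq_fun (hf.comp (hg.prodMk hk.fst)) hk.snd)
    measurable_const measurable_const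

lemma measurable_dAgree (hf : Measurable (Function.uncurry f)) (hh : H × H) :
    Measurable (dAgree f hh) :=
  Measurable.ite (measurableSet_eq_fun (hf.comp (measurable_const.prodMk measurable_id))
    (hf.comp (measurable_const.prodMk measurable_id))) measurable_const measurable_const

lemma integrable_errInd {α : Type*} [MeasurableSpace α] {μ : Measure α} [IsFiniteMeasure μ]
    (hf : Measurable (Function.uncurry f)) {g : α → H} {k : α → X × Bool}
    (hg : Measurable g) (hk : Measurable k) :
    Integrable (fun a => errInd f (g a) (k a)) μ :=
  .of_bound (measurable_errInd hf hg hk).aestronglyMeasurable 1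
    (ae_of_all _ fun _ => norm_errInd_le_one ..)

lemma integrable_errInd_mul_errInd {α : Type*} [MeasurableSpace α] {μ : Measure α}
    [IsFiniteMeasure μ] (hf : Measurable (Function.uncurry f)) {g g' : α → H} {k : α → X × Bool}
    (hg : Measurable g) (hg' : Measurable g') (hk : Measurable k) :
    Integrable (fun a => errInd f (g a) (k a) * errInd f (g' a) (k a)) μ :=
  (integrable_errInd hf hg' hk).bdd_mul (measurable_errInd hf hg hk).aestronglyMeasurable
    (ae_of_all _ fun _ => norm_errInd_le_one ..)

lemma integral_dAgree_map_fst (hf : Measurable (Function.uncurry f))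
    (P : Measure (X × Bool)) [IsFiniteMeasure P] (hh : H × H) :
    ∫ x, dAgree f hh x ∂(P.map Prod.fst)
      = ∫ z, errInd f hh.1 z ∂P + ∫ z, errInd f hh.2 z ∂P
        - 2 * ∫ z, errInd f hh.1 z * errInd f hh.2 z ∂P := by
  have hint : ∀ h, Integrable (errInd f h) P := fun _ =>
    integrable_errInd hf measurable_const measurable_id
  rw [integral_map measurable_fst.aemeasurable (measurable_dAgree hf hh).aestronglyMeasurable]
  simp_rw [dAgree_eq_errInd]
  rw [integral_sub (f := fun z => errInd f hh.1 z + errInd f hh.2 z) ((hint _).add (hint _))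
      ((integrable_errInd_mul_errInd hf measurable_const measurable_const
        measurable_id').const_mul 2),
    integral_add (hint _) (hint _), integral_const_mul]

theorem gibbsRisk_eq_half_expDis_add_jointErr (hf : Measurable (Function.uncurry f))
    (ρ : Measure H) [IsProbabilityMeasure ρ] (P : Measure (X × Bool)) [IsFiniteMeasure P] :
    gibbsRisk f ρ P = 1 / 2 * expDis f ρ (P.map Prod.fst) + jointErr f ρ P := by
  set g : H → ℝ := fun h => ∫ z, errInd f h z ∂P
  set J : H × H → ℝ := fun hh => ∫ z, errInd f hh.1 z * errInd f hh.2 z ∂P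
  have hg : Integrable g ρ :=
    (integrable_errInd (μ := ρ.prod P) hf measurable_fst measurable_snd).integral_prod_left
  have hJ : Integrable J (ρ.prod ρ) :=
    (integrable_errInd_mul_errInd (μ := (ρ.prod ρ).prod P) hf measurable_fst.fst
      measurable_fst.snd measurable_snd).integral_prod_left
  have hexpDis : expDis f ρ (P.map Prod.fst) = 2 * gibbsRisk f ρ P - 2 * jointErr f ρ P :=
    calc expDis f ρ (P.map Prod.fst)
        = ∫ hh, g hh.1 + g hh.2 - 2 * J hh ∂(ρ.prod ρ) :=
          integral_congr_ae (ae_of_all _ (integral_dAgree_map_fst hf P))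
      _ = ∫ hh, g hh.1 ∂(ρ.prod ρ) + ∫ hh, g hh.2 ∂(ρ.prod ρ) - 2 * ∫ hh, J hh ∂(ρ.prod ρ) := by
          rw [integral_sub (f := fun hh => g hh.1 + g hh.2)
              ((hg.comp_fst ρ).add (hg.comp_snd ρ)) (hJ.const_mul 2),
            integral_add (hg.comp_fst ρ) (hg.comp_snd ρ), integral_const_mul]
      _ = 2 * gibbsRisk f ρ P - 2 * jointErr f ρ P := by
          rw [integral_fun_fst, integral_fun_snd]
          simp only [probReal_univ, one_smul]
          rw [gibbsRisk, jointErr]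
          ring
  linarith

end GibbsDecomposition

theorem multisource_da_bound_gibbs_general
    (f : H → X → Bool) (hf : Measurable (Function.uncurry f))
    (n : ℕ)
    (PS : Fin n → Measure (X × Bool)) [∀ j, IsProbabilityMeasure (PS j)]
    (PT : Measure (X × Bool)) [IsProbabilityMeasure PT]
    (v : Fin n → ℝ)
    (ρ : Measure H) [IsProbabilityMeasure ρ] :
    gibbsRisk f ρ PT
      ≤ (∑ j, v j * gibbsRisk f ρ (PS j))
        + (1 / 2) * |expDis f ρ (PT.map Prod.fst)
                      - ∑ j, v j * expDis f ρ ((PS j).map Prod.fst)|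
        + |jointErr f ρ PT - ∑ j, v j * jointErr f ρ (PS j)| := by
  have hsources : ∑ j, v j * gibbsRisk f ρ (PS j)
      = 1 / 2 * ∑ j, v j * expDis f ρ ((PS j).map Prod.fst) + ∑ j, v j * jointErr f ρ (PS j) := by
    simp only [gibbsRisk_eq_half_expDis_add_jointErr hf ρ, mul_add, Finset.sum_add_distrib,
      Finset.mul_sum]
    ring_nf
  rw [gibbsRisk_eq_half_expDis_add_jointErr hf ρ PT, hsources]
  linarith [le_abs_self
      (expDis f ρ (PT.map Prod.fst) - ∑ j, v j * expDis f ρ ((PS j).map Prod.fst)),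
    le_abs_self (jointErr f ρ PT - ∑ j, v j * jointErr f ρ (PS j))]

/-- Theorem 15 (multisource domain adaptation bound for the Gibbs classifier):
`R_{P_T}(Gρ) ≤ Σ_j v_j R_{P_{S_j}}(Gρ) + (1/2) dis_ρ(D_S^v,D_T) + λ_ρ^v`. -/
theorem multisource_da_bound_gibbs
    (f : H → X → Bool) (hf : Measurable (Function.uncurry f))
    (n : ℕ) (hn : 0 < n)
    (PS : Fin n → Measure (X × Bool)) [∀ j, IsProbabilityMeasure (PS j)]
    (PT : Measure (X × Bool)) [IsProbabilityMeasure PT]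
    (v : Fin n → ℝ) (hv0 : ∀ j, 0 ≤ v j) (hv1 : ∑ j, v j = 1)
    (ρ : Measure H) [IsProbabilityMeasure ρ] :
    gibbsRisk f ρ PT
      ≤ (∑ j, v j * gibbsRisk f ρ (PS j))
        + (1 / 2) * |expDis f ρ (PT.map Prod.fst)
                      - ∑ j, v j * expDis f ρ ((PS j).map Prod.fst)|
        + |jointErr f ρ PT - ∑ j, v j * jointErr f ρ (PS j)| :=
  multisource_da_bound_gibbs_general f hf n PS PT v ρ

end
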